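/- Let ξ be a unit vector in ℝ⁷ and let u, v, w be vectors orthogonal to ξ. Then Ω_ξ = Re Ω_ξ + i Im Ω_ξ is a (3,0)-form with respect to the almost complex structure J_ξ(u) = u×ξ; concretely: φ₀(u×ξ, v×ξ, w) = −φ₀(u,v,w), and ψ₀(ξ, u×ξ, v, w) = φ₀(u,v,w) (i.e., Im Ω_ξ(J_ξ u, v, w) = Re Ω_ξ(u,v,w)). -/

import Mathlib

open scoped RealInnerProductSpace

noncomputable section

/-- `V7` is ℝ⁷ with its Euclidean inner product. -/
abbrev V7 : Type := EuclideanSpace ℝ (Fin 7)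

/-- Evaluation of the wedge product `eⁱ ∧ eʲ ∧ eᵏ` of dual basis 1-forms on three vectors. -/
def w3 (i j k : Fin 7) (u v w : V7) : ℝ :=
  Matrix.det !![u i, u j, u k; v i, v j, v k; w i, w j, w k]

/-- Evaluation of the wedge product `eⁱ ∧ eʲ ∧ eᵏ ∧ eˡ` on four vectors. -/
def w4 (i j k l : Fin 7) (u v w z : V7) : ℝ :=
  Matrix.det !![u i, u j, u k, u l; v i, v j, v k, v l;
                w i, w j, w k, w l; z i, z j, z k, z l]

/-- The standard G₂ 3-form φ₀ = e¹²³+e¹⁴⁵+e¹⁶⁷+e²⁴⁶−e²⁵⁷−e³⁴⁷−e³⁵⁶ (0-indexed). -/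
def phi0 (u v w : V7) : ℝ :=
  w3 0 1 2 u v w + w3 0 3 4 u v w + w3 0 5 6 u v w + w3 1 3 5 u v w
    - w3 1 4 6 u v w - w3 2 3 6 u v w - w3 2 4 5 u v w

/-- The 4-form ψ₀ = ∗φ₀ = e⁴⁵⁶⁷+e²³⁶⁷+e²³⁴⁵+e¹³⁵⁷−e¹³⁴⁶−e¹²⁵⁶−e¹²⁴⁷ (0-indexed). -/
def psi0 (u v w z : V7) : ℝ :=
  w4 3 4 5 6 u v w z + w4 1 2 5 6 u v w z + w4 1 2 3 4 u v w z + w4 0 2 4 6 u v w z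
    - w4 0 2 3 5 u v w z - w4 0 1 4 5 u v w z - w4 0 1 3 6 u v w z

/-! The identity `⟨u × v, w⟩ = φ₀(u, v, w)` determines the cross product, so it is the explicit
bilinear map `g2Cross`. For that map both claims are polynomial identities in the coordinates once
the correction terms in `⟨ξ, ξ⟩ − 1`, `⟨u, ξ⟩`, `⟨v, ξ⟩`, `⟨w, ξ⟩` are added, and these identities
hold for arbitrary `ξ, u, v, w`. -/

theorem Matrix.det_fin_four_of {R : Type*} [CommRing R] (a b c d e f g h i j k l m n o p : R) :
    Matrix.det !![a, b, c, d; e, f, g, h; i, j, k, l; m, n, o, p] =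
      a * Matrix.det !![f, g, h; j, k, l; n, o, p] - b * Matrix.det !![e, g, h; i, k, l; m, o, p]
        + c * Matrix.det !![e, f, h; i, j, l; m, n, p]
        - d * Matrix.det !![e, f, g; i, j, k; m, n, o] := by
  simp [Matrix.det_succ_row_zero, Fin.sum_univ_succ, Fin.succAbove]
  ring

def g2Cross (u v : V7) : V7 :=
  !₂[u 1 * v 2 - u 2 * v 1 + u 3 * v 4 - u 4 * v 3 + u 5 * v 6 - u 6 * v 5,
    -u 0 * v 2 + u 2 * v 0 + u 3 * v 5 - u 4 * v 6 - u 5 * v 3 + u 6 * v 4,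
    u 0 * v 1 - u 1 * v 0 - u 3 * v 6 - u 4 * v 5 + u 5 * v 4 + u 6 * v 3,
    -u 0 * v 4 - u 1 * v 5 + u 2 * v 6 + u 4 * v 0 + u 5 * v 1 - u 6 * v 2,
    u 0 * v 3 + u 1 * v 6 + u 2 * v 5 - u 3 * v 0 - u 5 * v 2 - u 6 * v 1,
    -u 0 * v 6 + u 1 * v 3 - u 2 * v 4 - u 3 * v 1 + u 4 * v 2 + u 6 * v 0,
    u 0 * v 5 - u 1 * v 4 - u 2 * v 3 + u 3 * v 2 + u 4 * v 1 - u 5 * v 0]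

theorem inner_g2Cross (u v w : V7) : ⟪g2Cross u v, w⟫ = phi0 u v w := by
  simp only [g2Cross, phi0, w3, Matrix.det_fin_three, PiLp.inner_apply, RCLike.inner_apply, conj_trivial, Fin.sum_univ_seven,
    Matrix.of_apply, Matrix.cons_val', Matrix.cons_val_zero, Matrix.cons_val_one, Matrix.cons_val,
    Matrix.cons_val_fin_one]
  ring

theorem eq_g2Cross_of_inner {cross : V7 → V7 → V7}
    (h : ∀ u v w : V7, ⟪cross u v, w⟫ = phi0 u v w) : cross = g2Cross := by
  ext1 u; ext1 v
  exact ext_inner_right ℝ fun w => by rw [h, inner_g2Cross]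

theorem phi0_g2Cross_g2Cross (u v w ξ : V7) :
    phi0 (g2Cross u ξ) (g2Cross v ξ) w =
      -⟪ξ, ξ⟫ * phi0 u v w + ⟪u, ξ⟫ * phi0 v w ξ - ⟪v, ξ⟫ * phi0 u w ξ
        + 2 * ⟪w, ξ⟫ * phi0 u v ξ := by
  simp only [g2Cross, phi0, w3, Matrix.det_fin_three, PiLp.inner_apply, RCLike.inner_apply, conj_trivial, Fin.sum_univ_seven,
    Matrix.of_apply, Matrix.cons_val', Matrix.cons_val_zero, Matrix.cons_val_one, Matrix.cons_val,
    Matrix.cons_val_fin_one]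
  ring

theorem psi0_g2Cross (u v w ξ : V7) :
    psi0 ξ (g2Cross u ξ) v w =
      ⟪ξ, ξ⟫ * phi0 u v w - ⟪u, ξ⟫ * phi0 v w ξ + ⟪v, ξ⟫ * phi0 u w ξ
        - ⟪w, ξ⟫ * phi0 u v ξ := by
  simp only [g2Cross, phi0, psi0, w3, w4, Matrix.det_fin_three, Matrix.det_fin_four_of,
    PiLp.inner_apply, RCLike.inner_apply, conj_trivial, Fin.sum_univ_seven,
    Matrix.of_apply, Matrix.cons_val', Matrix.cons_val_zero, Matrix.cons_val_one, Matrix.cons_val,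
    Matrix.cons_val_fin_one]
  ring

theorem Omega_is_three_zero_form
    (cross : V7 → V7 → V7)
    (hcross : ∀ u v w : V7, ⟪cross u v, w⟫ = phi0 u v w)
    (ξ : V7) (hξ : ‖ξ‖ = 1) (u v w : V7)
    (hu : ⟪u, ξ⟫ = (0 : ℝ)) (hv : ⟪v, ξ⟫ = (0 : ℝ)) (hw : ⟪w, ξ⟫ = (0 : ℝ)) :
    phi0 (cross u ξ) (cross v ξ) w = -phi0 u v w ∧
      psi0 ξ (cross u ξ) v w = phi0 u v w := by
  obtain rfl := eq_g2Cross_of_inner hcross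
  have hξξ : ⟪ξ, ξ⟫ = (1 : ℝ) := by rw [real_inner_self_eq_norm_sq, hξ, one_pow]
  rw [phi0_g2Cross_g2Cross, psi0_g2Cross, hξξ, hu, hv, hw]
  constructor <;> ring
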